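/- Let g be the 8-dimensional real nilpotent Lie algebra with complex structure J whose space of (1,0)-forms has a basis φ¹,...,φ⁴ satisfying dφ¹ = dφ² = 0, dφ³ = φ¹∧φ̄¹, dφ⁴ = φ¹∧φ². Then every 2-form of the shape ω_C = A·φ¹∧φ² + B·φ¹∧φ³ + C·φ¹∧φ⁴ + D·φ²∧φ⁴ with A,B,C,D ∈ ℂ and B·D ≠ 0 is a closed (2,0)-form satisfying ω_C ∧ ω_C ≠ 0. -/

import Mathlib

/-
STATEMENT 3: On the 8-dimensional nilpotent Lie algebra with complex structure whose
(1,0)-forms φ¹,…,φ⁴ satisfy dφ¹ = dφ² = 0, dφ³ = φ¹∧φ̄¹, dφ⁴ = φ¹∧φ², every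
ω_C = A φ¹∧φ² + B φ¹∧φ³ + C φ¹∧φ⁴ + D φ²∧φ⁴ with B·D ≠ 0 is a closed (2,0)-form
with ω_C ∧ ω_C ≠ 0.

We model the complexified Chevalley–Eilenberg algebra as the exterior algebra over ℂ
on eight generators: `gen 0,…,gen 3` are φ¹,…,φ⁴ and `gen 4,…,gen 7` are φ̄¹,…,φ̄⁴.
The differential is determined by its values `dgen` on generators (structure equations
together with their conjugates) and extended to products of two generators by the
derivation rule d(φⁱ∧φʲ) = dφⁱ∧φʲ - φⁱ∧dφʲ.
-/

noncomputable section

abbrev E := ExteriorAlgebra ℂ (Fin 8 → ℂ)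

def gen (i : Fin 8) : E := ExteriorAlgebra.ι ℂ (Pi.single i 1)

/-- structure equations: dφ¹ = dφ² = 0, dφ³ = φ¹∧φ̄¹, dφ⁴ = φ¹∧φ², plus conjugates. -/
def dgen : Fin 8 → E :=
  ![0, 0, gen 0 * gen 4, gen 0 * gen 1, 0, 0, gen 4 * gen 0, gen 4 * gen 5]

/-- d of the wedge of two generators, by the Leibniz rule. -/
def d2 (i j : Fin 8) : E := dgen i * gen j - gen i * dgen j

/-- ω_C = A φ¹∧φ² + B φ¹∧φ³ + C φ¹∧φ⁴ + D φ²∧φ⁴. -/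
def Om (A B C D : ℂ) : E :=
  A • (gen 0 * gen 1) + B • (gen 0 * gen 2) + C • (gen 0 * gen 3) + D • (gen 1 * gen 3)

/-- dω_C, computed by linearity from the Leibniz rule on monomials. -/
def dOm (A B C D : ℂ) : E := A • d2 0 1 + B • d2 0 2 + C • d2 0 3 + D • d2 1 3

/-
The only nonzero differentials, dφ³ = φ¹∧φ̄¹ and dφ⁴ = φ¹∧φ², contain φ¹ (and dφ⁴ also φ²);
since φ³ occurs in ω_C only next to φ¹, and φ⁴ only next to φ¹ or φ², every term of dω_C has a
repeated factor. In ω_C ∧ ω_C every pair of monomials shares a factor except φ¹∧φ³ and φ²∧φ⁴,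
which commute, so ω_C ∧ ω_C = 2BD φ¹∧φ³∧φ²∧φ⁴; this is nonzero because a wedge of linearly
independent covectors is nonzero.
-/

theorem ExteriorAlgebra.ιMulti_ne_zero_of_linearIndependent {K V : Type*} [Field K]
    [AddCommGroup V] [Module K V] {n : ℕ} {v : Fin n → V} (hv : LinearIndependent K v) :
    ExteriorAlgebra.ιMulti K n v ≠ 0 := by
  have huniv : (Finset.univ : Finset (Fin n)).card = n := by simp
  have hne := (exteriorPower.ιMulti_family_linearIndependent_field (n := n) hv).ne_zero
    ⟨Finset.univ, huniv⟩
  have hid : ⇑(Set.powersetCard.ofFinEmbEquiv.symm ⟨Finset.univ, huniv⟩ : Fin n ↪o Fin n) = id :=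
    StrictMono.eq_id (OrderEmbedding.strictMono _)
  intro h
  apply hne
  ext1
  simp [exteriorPower.ιMulti_family, hid, h]

lemma gen_mul_self (i : Fin 8) : gen i * gen i = 0 := ExteriorAlgebra.ι_sq_zero _

lemma gen_anticomm (i j : Fin 8) : gen j * gen i = -(gen i * gen j) := by
  have h := ExteriorAlgebra.ι_add_mul_swap (R := ℂ) (Pi.single i 1 : Fin 8 → ℂ)
    (Pi.single j 1 : Fin 8 → ℂ)
  unfold gen
  linear_combination (norm := noncomm_ring) h

lemma gen_mul_gen_mul_self_left (i : Fin 8) (x : E) : gen i * (gen i * x) = 0 := by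
  rw [← mul_assoc, gen_mul_self, zero_mul]

lemma gen_mul_gen_mul_gen_self (i j : Fin 8) : gen i * (gen j * gen i) = 0 := by
  rw [gen_anticomm i j, mul_neg, gen_mul_gen_mul_self_left, neg_zero]

lemma commute_gen_mul_gen (i j k : Fin 8) : Commute (gen i * gen j) (gen k) := by
  calc gen i * gen j * gen k = -(gen i * gen k * gen j) := by
        rw [mul_assoc, gen_anticomm k j, mul_neg, mul_assoc]
    _ = gen k * (gen i * gen j) := by rw [gen_anticomm k i, neg_mul, neg_neg, mul_assoc]

lemma gen_mul_gen_mul_gen_mul_gen_eq_ιMulti (a b c d : Fin 8) :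
    gen a * gen b * (gen c * gen d) =
      ExteriorAlgebra.ιMulti ℂ 4 (fun k => Pi.single (![a, b, c, d] k) 1) := by
  simp [ExteriorAlgebra.ιMulti_apply, gen, Matrix.vecTail, mul_assoc]

lemma gen_mul_gen_mul_gen_mul_gen_eq_zero {a b c d : Fin 8}
    (h : ¬ Function.Injective ![a, b, c, d]) : gen a * gen b * (gen c * gen d) = 0 :=
  (gen_mul_gen_mul_gen_mul_gen_eq_ιMulti a b c d).trans <|
    AlternatingMap.map_eq_zero_of_not_injective _ _ fun hinj =>
      h (hinj.of_comp (f := fun i => Pi.single i 1))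

lemma gen_mul_gen_mul_gen_mul_gen_ne_zero {a b c d : Fin 8}
    (h : Function.Injective ![a, b, c, d]) : gen a * gen b * (gen c * gen d) ≠ 0 := by
  have hv : (fun k => (Pi.single (![a, b, c, d] k) 1 : Fin 8 → ℂ)) =
      Pi.basisFun ℂ (Fin 8) ∘ ![a, b, c, d] := by
    ext1; simp
  rw [gen_mul_gen_mul_gen_mul_gen_eq_ιMulti, hv]
  exact ExteriorAlgebra.ιMulti_ne_zero_of_linearIndependent
    ((Pi.basisFun ℂ (Fin 8)).linearIndependent.comp _ h)

lemma dOm_eq_zero (A B C D : ℂ) : dOm A B C D = 0 := by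
  simp [dOm, d2, dgen, gen_mul_gen_mul_self_left, gen_mul_gen_mul_gen_self]

lemma Om_mul_self (A B C D : ℂ) :
    Om A B C D * Om A B C D = (2 * B * D) • (gen 0 * gen 2 * (gen 1 * gen 3)) := by
  simp (disch := decide) only [Om, add_mul, mul_add, smul_mul_smul,
    gen_mul_gen_mul_gen_mul_gen_eq_zero, smul_zero, add_zero, zero_add]
  rw [((commute_gen_mul_gen 1 3 0).mul_right (commute_gen_mul_gen 1 3 2)).eq]
  module

theorem stmt3 (A B C D : ℂ) (h : B * D ≠ 0) :
    dOm A B C D = 0 ∧ Om A B C D * Om A B C D ≠ 0 := by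
  refine ⟨dOm_eq_zero A B C D, ?_⟩
  rw [Om_mul_self]
  exact smul_ne_zero (by simpa [mul_assoc] using h)
    (gen_mul_gen_mul_gen_mul_gen_ne_zero (by decide))
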